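/- Let F_Z be a function ring over the integers with reduction defined by division with remainder. For polynomials p, q ∈ F_Z and a set F: if 0 is the unique normal form of p − q with respect to →_F, then there exists g ∈ F_Z with p →*_F g and q →*_F g. -/

import Mathlib

variable {T : Type*} [LinearOrder T] [Nonempty T]

/-- The head term: the largest element of the support (junk value at `0`). -/
noncomputable def HT (f : T →₀ ℤ) : T :=
  if h : f.support.Nonempty then f.support.max' h else Classical.arbitrary T

/-- The head term as an element of `WithBot T` (`⊥` for the zero function). -/
def HTb (f : T →₀ ℤ) : WithBot T := f.support.max

/-- The head coefficient. -/
noncomputable def HC (f : T →₀ ℤ) : ℤ := f (HT f)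

/-- The data of a function ring over the integers with set of terms `T`. -/
structure FRMulZ (T : Type*) [LinearOrder T] where
  mul : (T →₀ ℤ) → (T →₀ ℤ) → (T →₀ ℤ)
  mul_assoc : ∀ f g h, mul (mul f g) h = mul f (mul g h)
  left_distrib : ∀ f g h, mul f (g + h) = mul f g + mul f h
  right_distrib : ∀ f g h, mul (f + g) h = mul f h + mul g h
  smul_mul : ∀ (a : ℤ) (f g : T →₀ ℤ), mul (a • f) g = a • mul f g
  mul_smul : ∀ (a : ℤ) (f g : T →₀ ℤ), mul f (a • g) = a • mul f g

/-- A right reductive restriction `≥` of the term ordering. -/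
structure RROrderZ (T : Type*) [LinearOrder T] [Nonempty T] (M : FRMulZ T) where
  geq : T → T → Prop
  refl : ∀ t, geq t t
  trans : ∀ {a b c}, geq a b → geq b c → geq a c
  antisymm : ∀ {a b}, geq a b → geq b a → a = b
  le_of_geq : ∀ {t s}, geq t s → s ≤ t
  compat : ∀ {t t₁ t₂ w : T}, geq t₂ t₁ → t < t₁ →
    HTb (M.mul (Finsupp.single t₁ (1 : ℤ)) (Finsupp.single w (1 : ℤ))) = (t₂ : WithBot T) →
    ∀ s ∈ (M.mul (Finsupp.single t (1 : ℤ)) (Finsupp.single w (1 : ℤ))).support, s < t₂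

/-- The total well-founded ordering `<_Z` on the integers:
`0 <_Z 1 <_Z 2 <_Z ⋯ <_Z -1 <_Z -2 <_Z ⋯`. -/
def zlt (a b : ℤ) : Prop :=
  (0 ≤ a ∧ b < 0) ∨ (0 ≤ a ∧ 0 < b ∧ a < b) ∨ (a < 0 ∧ b < 0 ∧ b < a)

/-- The ordering `≤_Z` on the integers. -/
def zle (a b : ℤ) : Prop := a = b ∨ zlt a b

/-- Right reduction over the integers, based on division with remainder:
`f` reduces `p` to `q` at the monomial `p t · t` if there is a term `s` with
`HT (f * s) = HT (HT f * s) = t ≥ HT f`, `p t ≥_Z HC (f * s) > 0`, and writing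
`p t = HC (f * s) · β + δ` with `0 ≤ δ < HC (f * s)`, we have
`q = p - f * (β · s)`. -/
def RRedZ (M : FRMulZ T) (O : RROrderZ T M) (f p q : T →₀ ℤ) : Prop :=
  f ≠ 0 ∧ ∃ t ∈ p.support, ∃ s : T,
    HTb (M.mul f (Finsupp.single s 1)) = (t : WithBot T) ∧
    HTb (M.mul (Finsupp.single (HT f) 1) (Finsupp.single s 1)) = (t : WithBot T) ∧
    O.geq t (HT f) ∧
    0 < HC (M.mul f (Finsupp.single s 1)) ∧
    zle (HC (M.mul f (Finsupp.single s 1))) (p t) ∧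
    ∃ β δ : ℤ, p t = HC (M.mul f (Finsupp.single s 1)) * β + δ ∧
      0 ≤ δ ∧ δ < HC (M.mul f (Finsupp.single s 1)) ∧
      q = p - M.mul f (Finsupp.single s β)

/-- Right reduction by a set of polynomials. -/
def RRedZSet (M : FRMulZ T) (O : RROrderZ T M) (F : Set (T →₀ ℤ)) (p q : T →₀ ℤ) : Prop :=
  ∃ f ∈ F, RRedZ M O f p q

/-!
Reduction strictly decreases a polynomial in the lexicographic order built from `>` on terms and
`<_Z` on coefficients, so it terminates, and we may induct along the reductions of `x = p - q`.
Let `w` be the head term of `x ≠ 0`. Reductions at smaller terms never touch the coefficient of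
`w`, so since every normal form of `x` is `0`, some `f * s` reduces `x` at `w`. If `γ` is the least
head coefficient of such a reducer, then `γ ∣ x w`: otherwise reducing by it leaves a remainder
`0 < x w % γ < γ` that must again be reducible at `w`, by a reducer with head coefficient `< γ`.
Reducing `p` and `q` at `w` by that reducer (in at most one step each) then yields `p'`, `q'`
whose difference is a one-step reduct of `x`.
-/

open Relation

lemma zlt_wellFounded : WellFounded zlt := by
  let key : ℤ → ℕ ×ₗ ℕ := fun a => toLex (if a < 0 then 1 else 0, a.natAbs)
  refine Subrelation.wf (fun {a b} h => ?_) (InvImage.wf key wellFounded_lt)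
  simp only [InvImage, key, Prod.Lex.toLex_lt_toLex]
  unfold zlt at h
  split_ifs <;> omega

lemma not_zlt_zero (a : ℤ) : ¬ zlt a 0 := by
  unfold zlt; omega

lemma zle_iff_of_pos {γ a : ℤ} (hγ : 0 < γ) : zle γ a ↔ a < 0 ∨ γ ≤ a := by
  unfold zle zlt; omega

lemma zle_iff_ediv_ne_zero {γ a : ℤ} (hγ : 0 < γ) : zle γ a ↔ a / γ ≠ 0 := by
  rw [zle_iff_of_pos hγ, Ne]
  constructor
  · intro h hzero
    have hdecomp := Int.mul_ediv_add_emod a γ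
    rw [hzero, mul_zero, zero_add] at hdecomp
    have := Int.emod_nonneg a hγ.ne'
    have := Int.emod_lt_of_pos a hγ
    omega
  · intro h
    by_contra! h'
    exact h (Int.ediv_eq_zero_of_lt h'.1 h'.2)

def NormalFormsZero {α : Type*} [Zero α] (R : α → α → Prop) (x : α) : Prop :=
  ∀ y, ReflTransGen R x y → (∀ z, ¬ R y z) → y = 0

lemma NormalFormsZero.of_reflTransGen {α : Type*} [Zero α] {R : α → α → Prop} {x y : α}
    (hx : NormalFormsZero R x) (hxy : ReflTransGen R x y) : NormalFormsZero R y :=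
  fun z hyz hz => hx z (hxy.trans hyz) hz

lemma exists_reflTransGen_normal {α : Type*} {R : α → α → Prop} (hR : WellFounded (flip R))
    (x : α) : ∃ y, ReflTransGen R x y ∧ ∀ z, ¬ R y z := by
  induction x using hR.induction with
  | _ x ih =>
    by_cases h : ∃ y, R x y
    · obtain ⟨y, hxy⟩ := h
      obtain ⟨z, hyz, hz⟩ := ih y hxy
      exact ⟨z, .head hxy hyz, hz⟩
    · exact ⟨x, .refl, not_exists.1 h⟩

lemma HT_eq_of_HTb_eq {g : T →₀ ℤ} {t : T} (hg : HTb g = t) : HT g = t := by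
  have hne : g.support.Nonempty := Finset.nonempty_iff_ne_empty.2 fun h => by simp [HTb, h] at hg
  rw [HT, dif_pos hne]
  exact WithBot.coe_injective ((Finset.coe_max' hne).trans hg)

lemma apply_eq_HC_of_HTb_eq {g : T →₀ ℤ} {t : T} (hg : HTb g = t) : g t = HC g := by
  rw [HC, HT_eq_of_HTb_eq hg]

omit [Nonempty T] in
lemma apply_eq_zero_of_HTb_lt {g : T →₀ ℤ} {t u : T} (hg : HTb g = t) (h : t < u) : g u = 0 :=
  Finsupp.notMem_support_iff.1 (Finset.notMem_of_max_lt h hg)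

omit [Nonempty T] in
lemma FRMulZ.mul_single_eq_smul (M : FRMulZ T) (f : T →₀ ℤ) (s : T) (β : ℤ) :
    M.mul f (Finsupp.single s β) = β • M.mul f (Finsupp.single s 1) := by
  rw [← M.mul_smul, Finsupp.smul_single, smul_eq_mul, mul_one]

omit [Nonempty T] in
lemma FRMulZ.sub_mul_single_apply (M : FRMulZ T) (p f : T →₀ ℤ) (s : T) (β : ℤ) (u : T) :
    (p - M.mul f (Finsupp.single s β)) u = p u - β * M.mul f (Finsupp.single s 1) u := by
  rw [Finsupp.sub_apply, M.mul_single_eq_smul, Finsupp.smul_apply, smul_eq_mul]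

section Reduction

variable {M : FRMulZ T} {O : RROrderZ T M} {F : Set (T →₀ ℤ)}

/-- The side conditions of `RRedZ` for reducing at the term `w` by `f * s`, i.e. those that do not
involve the polynomial being reduced. -/
structure IsReducerAt (M : FRMulZ T) (O : RROrderZ T M) (F : Set (T →₀ ℤ)) (w : T)
    (f : T →₀ ℤ) (s : T) : Prop where
  mem : f ∈ F
  ne_zero : f ≠ 0
  HTb_mul : HTb (M.mul f (Finsupp.single s 1)) = w
  HTb_HT_mul : HTb (M.mul (Finsupp.single (HT f) 1) (Finsupp.single s 1)) = w
  geq : O.geq w (HT f)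
  HC_pos : 0 < HC (M.mul f (Finsupp.single s 1))

lemma IsReducerAt.rRedZSet {w : T} {f : T →₀ ℤ} {s : T} (hA : IsReducerAt M O F w f s)
    {p : T →₀ ℤ} (hp : p w / HC (M.mul f (Finsupp.single s 1)) ≠ 0) :
    RRedZSet M O F p (p - M.mul f (Finsupp.single s (p w / HC (M.mul f (Finsupp.single s 1))))) :=
  ⟨f, hA.mem, hA.ne_zero, w, Finsupp.mem_support_iff.2 fun h => hp (by rw [h, Int.zero_ediv]),
    s, hA.HTb_mul, hA.HTb_HT_mul, hA.geq, hA.HC_pos, (zle_iff_ediv_ne_zero hA.HC_pos).2 hp, _, _,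
    (Int.mul_ediv_add_emod _ _).symm, Int.emod_nonneg _ hA.HC_pos.ne',
    Int.emod_lt_of_pos _ hA.HC_pos, rfl⟩

lemma IsReducerAt.reflTransGen {w : T} {f : T →₀ ℤ} {s : T} (hA : IsReducerAt M O F w f s)
    (p : T →₀ ℤ) :
    ReflTransGen (RRedZSet M O F) p
      (p - M.mul f (Finsupp.single s (p w / HC (M.mul f (Finsupp.single s 1))))) := by
  by_cases hp : p w / HC (M.mul f (Finsupp.single s 1)) = 0
  · rw [hp, M.mul_single_eq_smul, zero_smul, sub_zero]
  · exact .single (hA.rRedZSet hp)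

lemma RRedZSet.exists_reducerAt {p q : T →₀ ℤ} (h : RRedZSet M O F p q) :
    ∃ t ∈ p.support, ∃ f s, IsReducerAt M O F t f s ∧
      zle (HC (M.mul f (Finsupp.single s 1))) (p t) ∧
      (∀ u, t < u → q u = p u) ∧ zlt (q t) (p t) := by
  obtain ⟨f, hF, hf0, t, ht, s, h1, h2, hgeq, hHC, hzle, β, δ, hdiv, hδ0, hδlt, rfl⟩ := h
  refine ⟨t, ht, f, s, ⟨hF, hf0, h1, h2, hgeq, hHC⟩, hzle, fun u hu => ?_, ?_⟩
  · rw [M.sub_mul_single_apply, apply_eq_zero_of_HTb_lt h1 hu, mul_zero, sub_zero]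
  · rw [M.sub_mul_single_apply, apply_eq_HC_of_HTb_eq h1]
    have := (zle_iff_of_pos hHC).1 hzle
    unfold zlt
    rw [hdiv] at this ⊢
    ring_nf
    omega

lemma RRedZSet.lex_lt {p q : T →₀ ℤ} (h : RRedZSet M O F p q) :
    Finsupp.Lex (· > ·) zlt q p := by
  obtain ⟨t, -, -, -, -, -, hgt, hlt⟩ := h.exists_reducerAt
  exact Finsupp.lex_def.2 ⟨t, hgt, hlt⟩

lemma RRedZSet.wellFounded_flip (hwf : WellFounded ((· < ·) : T → T → Prop)) :
    WellFounded (flip (RRedZSet M O F)) :=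
  Subrelation.wf (fun h => RRedZSet.lex_lt h)
    (Finsupp.Lex.wellFounded' not_zlt_zero zlt_wellFounded hwf)

lemma RRedZSet.support_le {p q : T →₀ ℤ} {w : T} (hp : ∀ u ∈ p.support, u ≤ w)
    (h : RRedZSet M O F p q) : ∀ u ∈ q.support, u ≤ w := by
  obtain ⟨t, ht, -, -, -, -, hgt, -⟩ := h.exists_reducerAt
  intro u hu
  by_contra! hwu
  have hu' : u ∈ p.support := by
    rwa [Finsupp.mem_support_iff, ← hgt u ((hp t ht).trans_lt hwu), ← Finsupp.mem_support_iff]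
  exact (hp u hu').not_gt hwu

lemma support_le_of_reflTransGen {p q : T →₀ ℤ} {w : T} (hp : ∀ u ∈ p.support, u ≤ w)
    (h : ReflTransGen (RRedZSet M O F) p q) : ∀ u ∈ q.support, u ≤ w := by
  induction h with
  | refl => exact hp
  | tail _ hstep ih => exact hstep.support_le ih

lemma exists_reducerAt_of_normalFormsZero (hwf : WellFounded ((· < ·) : T → T → Prop))
    {x : T →₀ ℤ} {w : T} (hx : NormalFormsZero (RRedZSet M O F) x)
    (hbound : ∀ u ∈ x.support, u ≤ w) (hne : x w ≠ 0) :
    ∃ f s, IsReducerAt M O F w f s ∧ zle (HC (M.mul f (Finsupp.single s 1))) (x w) := by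
  by_contra! hnone
  have hfixed : ∀ y, ReflTransGen (RRedZSet M O F) x y → y w = x w := by
    intro y hy
    induction hy with
    | refl => rfl
    | @tail b c hxb hbc ih =>
      obtain ⟨t, ht, f, s, hA, hz, hgt, -⟩ := hbc.exists_reducerAt
      rcases (support_le_of_reflTransGen hbound hxb t ht).lt_or_eq with htw | rfl
      · rw [hgt w htw, ih]
      · exact absurd (ih ▸ hz) (hnone f s hA)
  obtain ⟨n, hxn, hn⟩ := exists_reflTransGen_normal (RRedZSet.wellFounded_flip hwf) x
  exact hne (by rw [← hfixed n hxn, hx n hxn hn, Finsupp.zero_apply])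

lemma exists_reducerAt_dvd (hwf : WellFounded ((· < ·) : T → T → Prop))
    {x : T →₀ ℤ} {w : T} (hx : NormalFormsZero (RRedZSet M O F) x)
    (hbound : ∀ u ∈ x.support, u ≤ w) (hne : x w ≠ 0) :
    ∃ f s, IsReducerAt M O F w f s ∧ HC (M.mul f (Finsupp.single s 1)) ∣ x w := by
  obtain ⟨f₀, s₀, hA₀, hz₀⟩ := exists_reducerAt_of_normalFormsZero hwf hx hbound hne
  obtain ⟨γ, ⟨f, s, hA, hγ⟩, hmin⟩ := Int.exists_least_of_bdd
    (P := fun γ => ∃ f s, IsReducerAt M O F w f s ∧ HC (M.mul f (Finsupp.single s 1)) = γ)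
    ⟨0, fun _ ⟨_, _, hA, h⟩ => h ▸ hA.HC_pos.le⟩ ⟨_, f₀, s₀, hA₀, rfl⟩
  refine ⟨f, s, hA, hγ ▸ Int.dvd_of_emod_eq_zero ?_⟩
  by_contra hrem
  have hγpos : 0 < γ := hγ ▸ hA.HC_pos
  have hz : zle γ (x w) := by
    have := hmin _ ⟨f₀, s₀, hA₀, rfl⟩
    rw [zle_iff_of_pos hA₀.HC_pos] at hz₀
    rw [zle_iff_of_pos hγpos]
    omega
  have hxy : RRedZSet M O F x (x - M.mul f (Finsupp.single s (x w / γ))) :=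
    hγ ▸ hA.rRedZSet ((zle_iff_ediv_ne_zero (hγ ▸ hA.HC_pos)).1 (hγ ▸ hz))
  have hyw : (x - M.mul f (Finsupp.single s (x w / γ))) w = x w % γ := by
    rw [M.sub_mul_single_apply, apply_eq_HC_of_HTb_eq hA.HTb_mul, hγ]
    have := Int.mul_ediv_add_emod (x w) γ
    linarith
  obtain ⟨f', s', hA', hz'⟩ := exists_reducerAt_of_normalFormsZero hwf
    (hx.of_reflTransGen (.single hxy)) (hxy.support_le hbound) (hyw ▸ hrem)
  rw [hyw, zle_iff_of_pos hA'.HC_pos] at hz'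
  have := hmin _ ⟨f', s', hA', rfl⟩
  have := Int.emod_nonneg (x w) hγpos.ne'
  have := Int.emod_lt_of_pos (x w) hγpos
  omega

theorem exists_common_reduct_of_normalFormsZero (hwf : WellFounded ((· < ·) : T → T → Prop))
    (x : T →₀ ℤ) (hx : NormalFormsZero (RRedZSet M O F) x) (p q : T →₀ ℤ)
    (hpq : p - q = x) :
    ∃ g, ReflTransGen (RRedZSet M O F) p g ∧ ReflTransGen (RRedZSet M O F) q g := by
  induction x using
    (RRedZSet.wellFounded_flip (M := M) (O := O) (F := F) hwf).induction generalizing p q with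
  | _ x ih =>
    rcases eq_or_ne x 0 with rfl | hx0
    · exact ⟨q, by rw [sub_eq_zero.1 hpq], .refl⟩
    have hsupp := Finsupp.support_nonempty_iff.2 hx0
    set w := x.support.max' hsupp
    have hxw : x w ≠ 0 := Finsupp.mem_support_iff.1 (x.support.max'_mem hsupp)
    obtain ⟨f, s, hA, c, hc⟩ :=
      exists_reducerAt_dvd hwf hx (fun u hu => x.support.le_max' u hu) hxw
    set γ := HC (M.mul f (Finsupp.single s 1))
    have hγ : γ ≠ 0 := hA.HC_pos.ne'
    have hxquot : x w / γ = c := by rw [hc, Int.mul_ediv_cancel_left _ hγ]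
    have hquot : p w / γ - q w / γ = x w / γ := by
      have hp : p w = q w + γ * c := by rw [← hc, ← hpq, Finsupp.sub_apply]; ring
      rw [hp, Int.add_mul_ediv_left _ _ hγ, hxquot]
      ring
    have hxy : RRedZSet M O F x (x - M.mul f (Finsupp.single s (x w / γ))) :=
      hA.rRedZSet fun h => hxw (by rw [hc, ← hxquot, h, mul_zero])
    obtain ⟨g, hpg, hqg⟩ := ih _ hxy (hx.of_reflTransGen (.single hxy))
        (p - M.mul f (Finsupp.single s (p w / γ))) (q - M.mul f (Finsupp.single s (q w / γ))) (by
      rw [M.mul_single_eq_smul _ _ (p w / γ), M.mul_single_eq_smul _ _ (q w / γ),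
        M.mul_single_eq_smul _ _ (x w / γ), ← hquot, sub_smul, ← hpq]
      abel)
    exact ⟨g, (hA.reflTransGen p).trans hpg, (hA.reflTransGen q).trans hqg⟩

end Reduction

theorem translation_lemma_int_general
    (hwf : WellFounded ((· < ·) : T → T → Prop))
    (M : FRMulZ T) (O : RROrderZ T M) (F : Set (T →₀ ℤ)) (p q : T →₀ ℤ)
    (huniq : ∀ h : T →₀ ℤ, Relation.ReflTransGen (RRedZSet M O F) (p - q) h →
        (∀ h', ¬ RRedZSet M O F h h') → h = 0) :
    ∃ g : T →₀ ℤ, Relation.ReflTransGen (RRedZSet M O F) p g ∧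
      Relation.ReflTransGen (RRedZSet M O F) q g :=
  exists_common_reduct_of_normalFormsZero hwf (p - q) huniq p q rfl

/-- Translation Lemma over the integers: if `0` is the unique normal form of
`p - q` with respect to `F`, then `p` and `q` have a common reduct. -/
theorem translation_lemma_int
    (hwf : WellFounded ((· < ·) : T → T → Prop))
    (M : FRMulZ T) (O : RROrderZ T M) (F : Set (T →₀ ℤ)) (p q : T →₀ ℤ)
    (h0 : Relation.ReflTransGen (RRedZSet M O F) (p - q) 0)
    (huniq : ∀ h : T →₀ ℤ, Relation.ReflTransGen (RRedZSet M O F) (p - q) h →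
        (∀ h', ¬ RRedZSet M O F h h') → h = 0) :
    ∃ g : T →₀ ℤ, Relation.ReflTransGen (RRedZSet M O F) p g ∧
      Relation.ReflTransGen (RRedZSet M O F) q g :=
  translation_lemma_int_general hwf M O F p q huniq
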